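/- arXiv:2502.04035 — 2 statements merged into one kernel-verified Lean document; each statement's English description precedes it below -/
import Mathlib

section
/- Let M = (S, s₀, X, Y, δ, λ) be an FSM with n states whose distinct states are pairwise strongly separable, with witness function ω, state identification sets W(s), and state cover V as in the context, and let M_I = (Q, q₀, X, Y, δ_I, λ_I) be an FSM over the same alphabets. Suppose that M_I does not conform to M and that for all v ∈ V and all w ∈ W(δ(s₀, v)) we have M ≈_{v·w} M_I. If ℓ ≥ 1 is the smallest positive integer such that D_ℓ ∪ DW_ℓ ≠ ∅, then M_I has at least n + ℓ − 1 states, i.e., |Q| ≥ n + ℓ − 1. -/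
/-- A (deterministic, completely-specified) FSM over input alphabet `X` and
output alphabet `Y`, with state type `S`: an initial state, a total transition
function and a total output function. -/
structure FSM (X Y S : Type) where
  init : S
  tr : S → X → S
  out : S → X → Y

namespace FSM

variable {X Y S : Type}

/-- The transition function extended to input sequences. -/
def trs (M : FSM X Y S) : S → List X → S
  | s, [] => s
  | s, x :: xs => M.trs (M.tr s x) xs

/-- The output function extended to input sequences. -/
def outs (M : FSM X Y S) : S → List X → List Y
  | _, [] => []
  | s, x :: xs => M.out s x :: M.outs (M.tr s x) xs

end FSM

/-- The input sequence `xs` separates state `s` of `M` from state `q` of `M'`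
(w.r.t. the similarity relation `sim`, lifted componentwise to sequences). -/
def Separates {X Y S S' : Type} (sim : Y → Y → Prop) (M : FSM X Y S) (M' : FSM X Y S')
    (s : S) (q : S') (xs : List X) : Prop :=
  ¬ List.Forall₂ sim (M.outs s xs) (M'.outs q xs)

/-- `xs` is a witness that states `s₁`, `s₂` of `M` are strongly separable:
every state `s₃` of every FSM `M'` over the same alphabets is separated by `xs`
from `s₁` or from `s₂`. -/
def StrongWitness {X Y S : Type} (sim : Y → Y → Prop) (M : FSM X Y S)
    (s₁ s₂ : S) (xs : List X) : Prop :=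
  ∀ (S' : Type) [Fintype S'] (M' : FSM X Y S') (s₃ : S'),
    Separates sim M M' s₁ s₃ xs ∨ Separates sim M M' s₂ s₃ xs

/-- `MI` conforms to `M`: on every input sequence the outputs are similar. -/
def Conforms {X Y S Q : Type} (sim : Y → Y → Prop) (MI : FSM X Y Q) (M : FSM X Y S) : Prop :=
  ∀ xs : List X, List.Forall₂ sim (M.outs M.init xs) (MI.outs MI.init xs)

/-- A state cover: a prefix-closed set of input sequences containing, for each
state, exactly one sequence reaching it from the initial state. -/
def StateCover {X Y S : Type} (M : FSM X Y S) (V : Set (List X)) : Prop :=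
  (∀ v ∈ V, ∀ u, u <+: v → u ∈ V) ∧
  ∀ s : S, ∃! v, v ∈ V ∧ M.trs M.init v = s

open Classical in
/-- One step of the product machine `P(M, MI)`; `none` is the error state `e`. -/
noncomputable def prodStep {X Y S Q : Type} (sim : Y → Y → Prop) (M : FSM X Y S)
    (MI : FSM X Y Q) : Option (S × Q) → X → Option (S × Q)
  | none, _ => none
  | some (s, q), x =>
      if sim (M.out s x) (MI.out q x) then some (M.tr s x, MI.tr q x) else none

/-- The transition function of the product machine extended to input sequences. -/
noncomputable def prodTrs {X Y S Q : Type} (sim : Y → Y → Prop) (M : FSM X Y S)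
    (MI : FSM X Y Q) : Option (S × Q) → List X → Option (S × Q)
  | p, [] => p
  | p, x :: xs => prodTrs sim M MI (prodStep sim M MI p x) xs

/-- The set `D_ℓ` of pairs `(v, x̄)` with `v ∈ V`, `|x̄| = ℓ`, and `M ≉_{v·x̄} M_I`. -/
def DSet {X Y S Q : Type} (sim : Y → Y → Prop) (M : FSM X Y S) (MI : FSM X Y Q)
    (V : Set (List X)) (ℓ : ℕ) : Set (List X × List X) :=
  {p | p.1 ∈ V ∧ p.2.length = ℓ ∧
    ¬ List.Forall₂ sim (M.outs M.init (p.1 ++ p.2)) (MI.outs MI.init (p.1 ++ p.2))}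

/-- The set `DW_ℓ` of pairs `(v, x̄)` with `v ∈ V`, `|x̄| = ℓ`, and
`M ≉_{v·x̄·w} M_I` for some `w ∈ W(δ(s₀, v·x̄))`. -/
def DWSet {X Y S Q : Type} (sim : Y → Y → Prop) (M : FSM X Y S) (MI : FSM X Y Q)
    (V : Set (List X)) (W : S → Set (List X)) (ℓ : ℕ) : Set (List X × List X) :=
  {p | p.1 ∈ V ∧ p.2.length = ℓ ∧
    ∃ w ∈ W (M.trs M.init (p.1 ++ p.2)),
      ¬ List.Forall₂ sim (M.outs M.init (p.1 ++ p.2 ++ w))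
          (MI.outs MI.init (p.1 ++ p.2 ++ w))}

namespace FSM

variable {X Y S : Type}

theorem trs_cons (M : FSM X Y S) (s : S) (x : X) (xs : List X) :
    M.trs s (x :: xs) = M.trs (M.tr s x) xs := rfl

theorem outs_cons (M : FSM X Y S) (s : S) (x : X) (xs : List X) :
    M.outs s (x :: xs) = M.out s x :: M.outs (M.tr s x) xs := rfl

theorem trs_append (M : FSM X Y S) (a b : List X) :
    ∀ s, M.trs s (a ++ b) = M.trs (M.trs s a) b := by
  induction a with
  | nil => intro s; rfl
  | cons x xs ih => intro s; rw [List.cons_append, trs_cons, trs_cons, ih]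

theorem outs_append (M : FSM X Y S) (a b : List X) :
    ∀ s, M.outs s (a ++ b) = M.outs s a ++ M.outs (M.trs s a) b := by
  induction a with
  | nil => intro s; rfl
  | cons x xs ih =>
    intro s
    rw [List.cons_append, outs_cons, outs_cons, trs_cons, ih, List.cons_append]

theorem outs_length (M : FSM X Y S) : ∀ (a : List X) (s), (M.outs s a).length = a.length := by
  intro a
  induction a with
  | nil => intro s; rfl
  | cons x xs ih => intro s; rw [outs_cons, List.length_cons, ih, List.length_cons]

end FSM

theorem forall2_append_split {α β : Type} {r : α → β → Prop} {a : List α} {b : List β}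
    {c : List α} {d : List β} (hl : a.length = b.length)
    (h : List.Forall₂ r (a ++ c) (b ++ d)) :
    List.Forall₂ r a b ∧ List.Forall₂ r c d := by
  induction a generalizing b with
  | nil =>
    cases b with
    | nil => exact ⟨List.Forall₂.nil, h⟩
    | cons y ys => simp at hl
  | cons x xs ih =>
    cases b with
    | nil => simp at hl
    | cons y ys =>
      rcases h with _ | ⟨hr, ht⟩
      obtain ⟨h1, h2⟩ := ih (by simpa using hl) ht
      exact ⟨List.Forall₂.cons hr h1, h2⟩

theorem forall2_append_join {α β : Type} {r : α → β → Prop} {a : List α} {b : List β}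
    {c : List α} {d : List β} (h1 : List.Forall₂ r a b) (h2 : List.Forall₂ r c d) :
    List.Forall₂ r (a ++ c) (b ++ d) := by
  induction h1 with
  | nil => exact h2
  | cons hr _ ih => exact List.Forall₂.cons hr ih

/-- Proposition on minimum size: if `M_I` does not conform to
`M`, passes `V` followed by the state identification sets, and `ℓ ≥ 1` is the
smallest positive integer with `D_ℓ ∪ DW_ℓ ≠ ∅`, then `M_I` has at least
`n + ℓ - 1` states. -/
theorem min_states_lower_bound {X Y S Q : Type} [Fintype X] [Fintype S] [Fintype Q]
    (sim : Y → Y → Prop) (M : FSM X Y S) (MI : FSM X Y Q) (n : ℕ)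
    (hn : Fintype.card S = n)
    (ω : S → S → List X)
    (hω : ∀ s₁ s₂ : S, s₁ ≠ s₂ →
      ω s₁ s₂ = ω s₂ s₁ ∧ StrongWitness sim M s₁ s₂ (ω s₁ s₂))
    (W : S → Set (List X))
    (hW : ∀ s₁ s₂ : S, s₁ ≠ s₂ →
      (∃ w ∈ W s₁, ω s₁ s₂ <+: w) ∧ (∃ w ∈ W s₂, ω s₁ s₂ <+: w))
    (V : Set (List X)) (hV : StateCover M V)
    (hVW : ∀ v ∈ V, ∀ w ∈ W (M.trs M.init v),
      List.Forall₂ sim (M.outs M.init (v ++ w)) (MI.outs MI.init (v ++ w)))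
    (hnc : ¬ Conforms sim MI M)
    (ℓ : ℕ) (hℓ : 1 ≤ ℓ)
    (hne : (DSet sim M MI V ℓ ∪ DWSet sim M MI V W ℓ).Nonempty)
    (hmin : ∀ ℓ' : ℕ, 1 ≤ ℓ' → ℓ' < ℓ →
      DSet sim M MI V ℓ' ∪ DWSet sim M MI V W ℓ' = ∅) :
    n + ℓ - 1 ≤ Fintype.card Q := by
  classical
  obtain ⟨hpc, hcov⟩ := hV
  obtain ⟨⟨v, xs⟩, hp⟩ := hne
  rw [Set.mem_union] at hp
  have hvV : v ∈ V := by rcases hp with h | h <;> exact h.1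
  have hxl : xs.length = ℓ := by rcases hp with h | h <;> exact h.2.1
  obtain ⟨w, hwW, hfail⟩ :
      ∃ w, (w = [] ∨ w ∈ W (M.trs M.init (v ++ xs))) ∧
        ¬ List.Forall₂ sim (M.outs M.init (v ++ xs ++ w)) (MI.outs MI.init (v ++ xs ++ w)) := by
    rcases hp with h | h
    · exact ⟨[], Or.inl rfl, by simpa using h.2.2⟩
    · obtain ⟨w, hwW, hb⟩ := h.2.2
      exact ⟨w, Or.inr hwW, hb⟩
  -- no failing pair of intermediate length
  have hno : ∀ a ∈ V, ∀ t : List X, 1 ≤ t.length → t.length < ℓ →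
      (¬ List.Forall₂ sim (M.outs M.init (a ++ t)) (MI.outs MI.init (a ++ t)) ∨
        ∃ w' ∈ W (M.trs M.init (a ++ t)),
          ¬ List.Forall₂ sim (M.outs M.init (a ++ t ++ w'))
            (MI.outs MI.init (a ++ t ++ w'))) → False := by
    intro a ha t h1 h2 hb
    have hem := hmin t.length h1 h2
    have hmem : (a, t) ∈ DSet sim M MI V t.length ∪ DWSet sim M MI V W t.length := by
      rcases hb with hb | hb
      · exact Set.mem_union_left _ ⟨ha, rfl, hb⟩
      · exact Set.mem_union_right _ ⟨ha, rfl, hb⟩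
    rw [hem] at hmem
    exact hmem
  -- cover representatives
  have hcov' : ∀ s : S, ∃ v', v' ∈ V ∧ M.trs M.init v' = s := fun s => (hcov s).exists
  let vv : S → List X := fun s => (hcov' s).choose
  have hvvV : ∀ s, vv s ∈ V := fun s => (hcov' s).choose_spec.1
  have hvvT : ∀ s, M.trs M.init (vv s) = s := fun s => (hcov' s).choose_spec.2
  -- restriction to prefixes
  have pref : ∀ (s : S) (q : Q) (a b : List X), a <+: b →
      List.Forall₂ sim (M.outs s b) (MI.outs q b) →
      List.Forall₂ sim (M.outs s a) (MI.outs q a) := by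
    intro s q a b hab h
    obtain ⟨t, rfl⟩ := hab
    rw [M.outs_append, MI.outs_append] at h
    exact (forall2_append_split (by rw [M.outs_length, MI.outs_length]) h).1
  -- no state of MI can be identified as two distinct states of M
  have keyA : ∀ (s₁ s₂ : S) (q : Q), s₁ ≠ s₂ →
      (∀ w' ∈ W s₁, List.Forall₂ sim (M.outs s₁ w') (MI.outs q w')) →
      (∀ w' ∈ W s₂, List.Forall₂ sim (M.outs s₂ w') (MI.outs q w')) → False := by
    intro s₁ s₂ q hne12 hi1 hi2
    obtain ⟨-, hwit⟩ := hω s₁ s₂ hne12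
    obtain ⟨⟨w₁, hw₁, hp₁⟩, ⟨w₂, hw₂, hp₂⟩⟩ := hW s₁ s₂ hne12
    have h₁ := pref s₁ q _ _ hp₁ (hi1 w₁ hw₁)
    have h₂ := pref s₂ q _ _ hp₂ (hi2 w₂ hw₂)
    rcases hwit Q MI q with h | h
    · exact h h₁
    · exact h h₂
  -- the run along the failing trace stays similar before step ℓ
  have hOK : ∀ i, 1 ≤ i → i < ℓ →
      List.Forall₂ sim (M.outs M.init (v ++ xs.take i))
        (MI.outs MI.init (v ++ xs.take i)) := by
    intro i h1 h2
    by_contra hcon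
    exact hno v hvV (xs.take i) (by rw [List.length_take, hxl]; omega)
      (by rw [List.length_take, hxl]; omega) (Or.inl hcon)
  -- intermediate states of MI pass the identification sets
  have hIdent : ∀ i, 1 ≤ i → i < ℓ → ∀ w' ∈ W (M.trs M.init (v ++ xs.take i)),
      List.Forall₂ sim (M.outs (M.trs M.init (v ++ xs.take i)) w')
        (MI.outs (MI.trs MI.init (v ++ xs.take i)) w') := by
    intro i h1 h2 w' hw'
    by_cases hc : List.Forall₂ sim (M.outs M.init (v ++ xs.take i ++ w'))
        (MI.outs MI.init (v ++ xs.take i ++ w'))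
    · rw [M.outs_append, MI.outs_append] at hc
      exact (forall2_append_split (by rw [M.outs_length, MI.outs_length]) hc).2
    · exact (hno v hvV (xs.take i) (by rw [List.length_take, hxl]; omega)
        (by rw [List.length_take, hxl]; omega) (Or.inr ⟨w', hw', hc⟩)).elim
  -- states reached by the cover pass the identification sets
  have hIdentS : ∀ s : S, ∀ w' ∈ W s,
      List.Forall₂ sim (M.outs s w') (MI.outs (MI.trs MI.init (vv s)) w') := by
    intro s w' hw'
    have h := hVW (vv s) (hvvV s) w' (by rw [hvvT]; exact hw')
    rw [M.outs_append, MI.outs_append, hvvT] at h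
    exact (forall2_append_split (by rw [M.outs_length, MI.outs_length]) h).2
  have hsplit : ∀ i : ℕ, (v ++ xs.take i) ++ (xs.drop i ++ w) = v ++ xs ++ w := by
    intro i
    rw [List.append_assoc v, ← List.append_assoc (xs.take i), List.take_append_drop,
      ← List.append_assoc]
  have hfailSuf : ∀ i, 1 ≤ i → i < ℓ →
      ¬ List.Forall₂ sim (M.outs (M.trs M.init (v ++ xs.take i)) (xs.drop i ++ w))
        (MI.outs (MI.trs MI.init (v ++ xs.take i)) (xs.drop i ++ w)) := by
    intro i h1 h2 hcon
    apply hfail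
    rw [← hsplit i, M.outs_append, MI.outs_append]
    exact forall2_append_join (hOK i h1 h2) hcon
  have htrs_end : ∀ i : ℕ,
      M.trs (M.trs M.init (v ++ xs.take i)) (xs.drop i) = M.trs M.init (v ++ xs) := by
    intro i
    rw [← M.trs_append, List.append_assoc, List.take_append_drop]
  -- pumping: an intermediate MI-state cannot coincide with a cover state of the same M-state
  have pump1 : ∀ (s : S) (i : ℕ), 1 ≤ i → i < ℓ → s = M.trs M.init (v ++ xs.take i) →
      MI.trs MI.init (vv s) = MI.trs MI.init (v ++ xs.take i) → False := by
    intro s i h1 h2 hs hq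
    have hwhole : ¬ List.Forall₂ sim (M.outs M.init (vv s ++ (xs.drop i ++ w)))
        (MI.outs MI.init (vv s ++ (xs.drop i ++ w))) := by
      intro hcon
      rw [M.outs_append, MI.outs_append] at hcon
      have h3 := (forall2_append_split (by rw [M.outs_length, MI.outs_length]) hcon).2
      rw [hq, hvvT, hs] at h3
      exact hfailSuf i h1 h2 h3
    rcases hwW with rfl | hwmem
    · exact hno (vv s) (hvvV s) (xs.drop i) (by rw [List.length_drop, hxl]; omega)
        (by rw [List.length_drop, hxl]; omega) (Or.inl (by simpa using hwhole))
    · refine hno (vv s) (hvvV s) (xs.drop i) (by rw [List.length_drop, hxl]; omega)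
        (by rw [List.length_drop, hxl]; omega) (Or.inr ⟨w, ?_, ?_⟩)
      · rw [M.trs_append, hvvT, hs, htrs_end]
        exact hwmem
      · rw [List.append_assoc]
        exact hwhole
  -- pumping: two distinct intermediate MI-states mapping to the same M-state
  have pump2 : ∀ i j, 1 ≤ i → i < j → j < ℓ →
      M.trs M.init (v ++ xs.take i) = M.trs M.init (v ++ xs.take j) →
      MI.trs MI.init (v ++ xs.take i) = MI.trs MI.init (v ++ xs.take j) → False := by
    intro i j h1 hij hj hs hq
    have hwhole : ¬ List.Forall₂ sim
        (M.outs M.init ((v ++ xs.take i) ++ (xs.drop j ++ w)))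
        (MI.outs MI.init ((v ++ xs.take i) ++ (xs.drop j ++ w))) := by
      intro hcon
      rw [M.outs_append, MI.outs_append] at hcon
      have h3 := (forall2_append_split (by rw [M.outs_length, MI.outs_length]) hcon).2
      rw [hs, hq] at h3
      exact hfailSuf j (by omega) hj h3
    rcases hwW with rfl | hwmem
    · refine hno v hvV (xs.take i ++ xs.drop j)
        (by rw [List.length_append, List.length_take, List.length_drop, hxl]; omega)
        (by rw [List.length_append, List.length_take, List.length_drop, hxl]; omega)
        (Or.inl ?_)
      simpa [List.append_assoc] using hwhole
    · refine hno v hvV (xs.take i ++ xs.drop j)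
        (by rw [List.length_append, List.length_take, List.length_drop, hxl]; omega)
        (by rw [List.length_append, List.length_take, List.length_drop, hxl]; omega)
        (Or.inr ⟨w, ?_, ?_⟩)
      · rw [← List.append_assoc, M.trs_append, hs, htrs_end]
        exact hwmem
      · simp only [List.append_assoc] at hwhole ⊢
        exact hwhole
  -- the injection
  let f : S ⊕ Fin (ℓ - 1) → Q := fun p =>
    Sum.elim (fun s => MI.trs MI.init (vv s))
      (fun k : Fin (ℓ - 1) => MI.trs MI.init (v ++ xs.take ((k : ℕ) + 1))) p
  have hinj : Function.Injective f := by
    intro p₁ p₂ hfe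
    rcases p₁ with s₁ | k₁ <;> rcases p₂ with s₂ | k₂ <;>
      simp only [f, Sum.elim_inl, Sum.elim_inr] at hfe
    · by_contra hne12
      have hne' : s₁ ≠ s₂ := fun h => hne12 (by rw [h])
      refine (keyA s₁ s₂ (MI.trs MI.init (vv s₁)) hne' (hIdentS s₁) ?_).elim
      intro w' hw'
      rw [hfe]
      exact hIdentS s₂ w' hw'
    · exfalso
      have h1 : 1 ≤ (k₂ : ℕ) + 1 := by omega
      have h2 : (k₂ : ℕ) + 1 < ℓ := by have := k₂.isLt; omega
      by_cases hss : s₁ = M.trs M.init (v ++ xs.take ((k₂ : ℕ) + 1))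
      · exact pump1 s₁ ((k₂ : ℕ) + 1) h1 h2 hss hfe
      · refine keyA s₁ (M.trs M.init (v ++ xs.take ((k₂ : ℕ) + 1)))
          (MI.trs MI.init (vv s₁)) hss (hIdentS s₁) ?_
        intro w' hw'
        rw [hfe]
        exact hIdent ((k₂ : ℕ) + 1) h1 h2 w' hw'
    · exfalso
      have h1 : 1 ≤ (k₁ : ℕ) + 1 := by omega
      have h2 : (k₁ : ℕ) + 1 < ℓ := by have := k₁.isLt; omega
      by_cases hss : s₂ = M.trs M.init (v ++ xs.take ((k₁ : ℕ) + 1))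
      · exact pump1 s₂ ((k₁ : ℕ) + 1) h1 h2 hss hfe.symm
      · refine keyA s₂ (M.trs M.init (v ++ xs.take ((k₁ : ℕ) + 1)))
          (MI.trs MI.init (vv s₂)) hss (hIdentS s₂) ?_
        intro w' hw'
        rw [hfe.symm]
        exact hIdent ((k₁ : ℕ) + 1) h1 h2 w' hw'
    · have h1 : 1 ≤ (k₁ : ℕ) + 1 := by omega
      have h2 : (k₁ : ℕ) + 1 < ℓ := by have := k₁.isLt; omega
      have h3 : 1 ≤ (k₂ : ℕ) + 1 := by omega
      have h4 : (k₂ : ℕ) + 1 < ℓ := by have := k₂.isLt; omega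
      have hkk : (k₁ : ℕ) = (k₂ : ℕ) := by
        by_contra hne12
        rcases Nat.lt_trichotomy ((k₁ : ℕ) + 1) ((k₂ : ℕ) + 1) with hlt | heq | hlt
        · by_cases hss : M.trs M.init (v ++ xs.take ((k₁ : ℕ) + 1)) =
              M.trs M.init (v ++ xs.take ((k₂ : ℕ) + 1))
          · exact pump2 _ _ h1 hlt h4 hss hfe
          · refine keyA _ _ (MI.trs MI.init (v ++ xs.take ((k₁ : ℕ) + 1))) hss
              (hIdent ((k₁ : ℕ) + 1) h1 h2) ?_
            intro w' hw'
            rw [hfe]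
            exact hIdent ((k₂ : ℕ) + 1) h3 h4 w' hw'
        · omega
        · by_cases hss : M.trs M.init (v ++ xs.take ((k₂ : ℕ) + 1)) =
              M.trs M.init (v ++ xs.take ((k₁ : ℕ) + 1))
          · exact pump2 _ _ h3 hlt h2 hss hfe.symm
          · refine keyA _ _ (MI.trs MI.init (v ++ xs.take ((k₂ : ℕ) + 1))) hss
              (hIdent ((k₂ : ℕ) + 1) h3 h4) ?_
            intro w' hw'
            rw [hfe.symm]
            exact hIdent ((k₁ : ℕ) + 1) h1 h2 w' hw'
      exact congrArg Sum.inr (Fin.ext hkk)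
  have hcard : Fintype.card (S ⊕ Fin (ℓ - 1)) ≤ Fintype.card Q :=
    Fintype.card_le_of_injective f hinj
  rw [Fintype.card_sum, Fintype.card_fin, hn] at hcard
  omega
end

section
/- Let M be an FSM over input alphabet X and output alphabet Y, let ∼ be a reflexive similarity relation on Y, let s₁, s₂ be states of M, and let x̄ be an input sequence. Then x̄ is a witness that s₁ and s₂ are strongly separable (s₁ #ʷ_x̄ s₂) if and only if there is no output sequence ȳ ∈ Y* of length |x̄| with λ(s₁, x̄) ∼ ȳ and λ(s₂, x̄) ∼ ȳ. -/
lemma outs_length {X Y S : Type} (M : FSM X Y S) (s : S) (xs : List X) :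
    (M.outs s xs).length = xs.length := by
  induction xs generalizing s with
  | nil => rfl
  | cons x xs ih => simp [FSM.outs, ih]

/-- An FSM that just reads off the list `ys`, regardless of input. -/
def listFSM {X Y : Type} (y₀ : Y) (ys : List Y) : FSM X Y (Fin (ys.length + 1)) where
  init := 0
  tr i _ := if h : (i : ℕ) + 1 < ys.length + 1 then ⟨i + 1, h⟩ else i
  out i _ := ys.getD i y₀

lemma listFSM_outs {X Y : Type} (y₀ : Y) (ys : List Y) (xs : List X) (k : ℕ)
    (hk : k < ys.length + 1) (hle : k + xs.length ≤ ys.length) :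
    (listFSM y₀ ys).outs ⟨k, hk⟩ xs = (ys.drop k).take xs.length := by
  induction xs generalizing k with
  | nil => rfl
  | cons x xs ih =>
    have hklt : k < ys.length := by simp at hle; omega
    have h1 : k + 1 < ys.length + 1 := by omega
    have : (listFSM y₀ ys).tr (X := X) ⟨k, hk⟩ x = ⟨k + 1, h1⟩ := by
      simp [listFSM, hklt]
    rw [FSM.outs, this, ih (k + 1) h1 (by simp at hle ⊢; omega)]
    have hout : (listFSM y₀ ys).out (X := X) ⟨k, hk⟩ x = ys[k] := by
      simp [listFSM, List.getD, List.getElem?_eq_getElem hklt]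
    rw [hout]
    conv_rhs => rw [List.drop_eq_getElem_cons hklt]
    rfl

/-- `x̄` witnesses that `s₁` and `s₂` are strongly separable iff
there is no output sequence `ȳ` of length `|x̄|` similar to both `λ(s₁, x̄)`
and `λ(s₂, x̄)`. -/
theorem strongWitness_iff_no_common_output {X Y S : Type} [Fintype X] [Fintype S]
    (sim : Y → Y → Prop) (hrefl : ∀ y : Y, sim y y) (M : FSM X Y S)
    (s₁ s₂ : S) (xs : List X) :
    StrongWitness sim M s₁ s₂ xs ↔
      ¬ ∃ ys : List Y, ys.length = xs.length ∧
        List.Forall₂ sim (M.outs s₁ xs) ys ∧ List.Forall₂ sim (M.outs s₂ xs) ys := by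
  constructor
  · rintro hW ⟨ys, hlen, h1, h2⟩
    cases xs with
    | nil =>
      rcases hW S M s₁ with h | h <;>
        exact h (by cases ys <;> simp_all [FSM.outs])
    | cons x xs' =>
      set y₀ : Y := M.out s₁ x
      have h0 : (0 : ℕ) < ys.length + 1 := Nat.succ_pos _
      have hout0 : (listFSM y₀ ys).outs (X := X) ⟨0, h0⟩ (x :: xs') = ys := by
        rw [listFSM_outs y₀ ys (x :: xs') 0 h0 (by omega)]
        simp [← hlen]
      rcases hW (Fin (ys.length + 1)) (listFSM y₀ ys) ⟨0, h0⟩ with h | h <;>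
        · simp only [Separates, hout0] at h
          first | exact h h1 | exact h h2
  · intro h S' _ M' s₃
    by_contra hc
    push_neg at hc
    simp only [Separates, not_not] at hc
    exact h ⟨M'.outs s₃ xs, outs_length M' s₃ xs, hc.1, hc.2⟩
end
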